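/- arXiv:1308.4105 — 7 statements merged into one kernel-verified Lean document; each statement's English description precedes it below -/
import Mathlib

section
/- Let R be a local ring and s a central element of R. In the formal matrix ring M₂(R;s), the Jacobson radical consists exactly of the matrices [[a,b],[c,d]] with a ∈ J(R), d ∈ J(R), s·b ∈ J(R), and s·c ∈ J(R). -/
/-- The formal matrix ring `M₂(R;s)`: 2×2 matrices over `R` recorded by their four
entries, with the twisted multiplication
`[[a,b],[c,d]]·[[a',b'],[c',d']] = [[aa'+s²bc', ab'+bd'],[ca'+dc', s²cb'+dd']]`. -/
@[ext]
structure FM (R : Type*) (s : R) : Type _ where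
  a : R
  b : R
  c : R
  d : R

namespace FM

variable {R : Type*} [Ring R] {s : R}

instance : Zero (FM R s) := ⟨⟨0, 0, 0, 0⟩⟩
instance : One (FM R s) := ⟨⟨1, 0, 0, 1⟩⟩
instance : Add (FM R s) := ⟨fun x y => ⟨x.a + y.a, x.b + y.b, x.c + y.c, x.d + y.d⟩⟩
instance : Neg (FM R s) := ⟨fun x => ⟨-x.a, -x.b, -x.c, -x.d⟩⟩
instance : Mul (FM R s) :=
  ⟨fun x y => ⟨x.a * y.a + s * s * (x.b * y.c), x.a * y.b + x.b * y.d,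
    x.c * y.a + x.d * y.c, s * s * (x.c * y.b) + x.d * y.d⟩⟩

@[simp] lemma zero_a : (0 : FM R s).a = 0 := rfl
@[simp] lemma zero_b : (0 : FM R s).b = 0 := rfl
@[simp] lemma zero_c : (0 : FM R s).c = 0 := rfl
@[simp] lemma zero_d : (0 : FM R s).d = 0 := rfl
@[simp] lemma one_a : (1 : FM R s).a = 1 := rfl
@[simp] lemma one_b : (1 : FM R s).b = 0 := rfl
@[simp] lemma one_c : (1 : FM R s).c = 0 := rfl
@[simp] lemma one_d : (1 : FM R s).d = 1 := rfl
@[simp] lemma add_a (x y : FM R s) : (x + y).a = x.a + y.a := rfl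
@[simp] lemma add_b (x y : FM R s) : (x + y).b = x.b + y.b := rfl
@[simp] lemma add_c (x y : FM R s) : (x + y).c = x.c + y.c := rfl
@[simp] lemma add_d (x y : FM R s) : (x + y).d = x.d + y.d := rfl
@[simp] lemma neg_a (x : FM R s) : (-x).a = -x.a := rfl
@[simp] lemma neg_b (x : FM R s) : (-x).b = -x.b := rfl
@[simp] lemma neg_c (x : FM R s) : (-x).c = -x.c := rfl
@[simp] lemma neg_d (x : FM R s) : (-x).d = -x.d := rfl
@[simp] lemma mul_a (x y : FM R s) : (x * y).a = x.a * y.a + s * s * (x.b * y.c) := rfl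
@[simp] lemma mul_b (x y : FM R s) : (x * y).b = x.a * y.b + x.b * y.d := rfl
@[simp] lemma mul_c (x y : FM R s) : (x * y).c = x.c * y.a + x.d * y.c := rfl
@[simp] lemma mul_d (x y : FM R s) : (x * y).d = s * s * (x.c * y.b) + x.d * y.d := rfl

instance : AddCommGroup (FM R s) where
  add_assoc x y z := by ext <;> simp [add_assoc]
  zero_add x := by ext <;> simp
  add_zero x := by ext <;> simp
  add_comm x y := by ext <;> simp [add_comm]
  neg_add_cancel x := by ext <;> simp
  nsmul := nsmulRec
  zsmul := zsmulRec

/-- When `s` is central in `R`, `M₂(R;s)` is a ring. -/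
instance [hs : Fact (∀ x : R, s * x = x * s)] : Ring (FM R s) where
  __ := (inferInstance : AddCommGroup (FM R s))
  mul := (· * ·)
  one := 1
  mul_assoc x y z := by
    have hc : ∀ u v : R, u * (s * v) = s * (u * v) := fun u v => by
      rw [← mul_assoc, ← hs.out u, mul_assoc]
    ext <;> simp only [mul_a, mul_b, mul_c, mul_d, mul_add, add_mul, mul_assoc, hc] <;> abel
  one_mul x := by ext <;> simp
  mul_one x := by ext <;> simp
  left_distrib x y z := by ext <;> simp [mul_add, add_mul] <;> abel
  right_distrib x y z := by ext <;> simp [mul_add, add_mul] <;> abel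
  zero_mul x := by ext <;> simp
  mul_zero x := by ext <;> simp

/-- In a commutative ring every element is central. -/
instance (priority := 100) {R : Type*} [CommRing R] (s : R) : Fact (∀ x : R, s * x = x * s) :=
  ⟨fun x => mul_comm s x⟩

end FM

/-- An element is strongly J-clean if it is the sum of an idempotent and an element of
the Jacobson radical which commute. -/
def IsStronglyJClean {A : Type*} [Ring A] (x : A) : Prop :=
  ∃ e : A, IsIdempotentElem e ∧ x * e = e * x ∧ x - e ∈ (⊥ : Ideal A).jacobson

/-- An element is strongly clean if it is the sum of an idempotent and a unit
which commute. -/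
def IsStronglyClean {A : Type*} [Ring A] (x : A) : Prop :=
  ∃ e : A, IsIdempotentElem e ∧ x * e = e * x ∧ IsUnit (x - e)

/-- An element is strongly nil clean if it is the sum of an idempotent and a nilpotent
which commute. -/
def IsStronglyNilClean {A : Type*} [Ring A] (x : A) : Prop :=
  ∃ e : A, IsIdempotentElem e ∧ x * e = e * x ∧ IsNilpotent (x - e)

/-!
In a local ring `R` the Jacobson radical `J(R)` is the set of non-units, and `R` is
Dedekind-finite. In any ring, `x ∈ J` iff `y * x + 1` is left invertible for every `y`.
Testing `A ∈ J(M₂(R;s))` against matrices `Y` with a single nonzero entry `r` makes `Y * A + 1`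
triangular, and a left inverse of a triangular matrix gives left inverses of its diagonal entries;
this yields `a, d, s²b, s²c ∈ J(R)`, and `s²x ∈ J(R) → sx ∈ J(R)` since `J(R)` is the set of
non-units. Conversely, under these conditions every `Y * A + 1` has unit diagonal entries and
unit Schur complement `a - s² b d⁻¹ c`, so the factorisation
`[[a,b],[c,d]] = [[1, b d⁻¹],[0,1]] · [[a - s² b d⁻¹ c, 0],[0,d]] · [[1,0],[d⁻¹ c, 1]]`
shows that it is a unit.
-/

theorem Ideal.mem_jacobson_bot_iff_exists_mul_eq_one {R : Type*} [Ring R] {x : R} :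
    x ∈ (⊥ : Ideal R).jacobson ↔ ∀ y, ∃ z, z * (y * x + 1) = 1 := by
  simp only [Ideal.mem_jacobson_iff, Ideal.mem_bot, sub_eq_zero, mul_add, mul_one, mul_assoc]

namespace IsLocalRing

variable {R : Type*} [Ring R] [IsLocalRing R]

instance isDedekindFiniteMonoid : IsDedekindFiniteMonoid R where
  mul_eq_one_symm {x y} h := by
    have he : IsIdempotentElem (y * x) := by
      rw [IsIdempotentElem, mul_assoc, ← mul_assoc x, h, one_mul]
    rcases isUnit_or_isUnit_of_add_one (add_sub_cancel (y * x) 1) with hu | hu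
    · exact (IsIdempotentElem.iff_eq_one_of_isUnit hu).1 he
    · have hyx : y * x = 0 := by
        simpa using (IsIdempotentElem.iff_eq_one_of_isUnit hu).1 he.one_sub
      have h1 : (1 : R) = x * (y * x) * y := by rw [← mul_assoc, h, one_mul, h]
      simp [hyx] at h1

theorem mem_jacobson_bot_iff_not_isUnit {x : R} :
    x ∈ (⊥ : Ideal R).jacobson ↔ ¬IsUnit x := by
  rw [Ideal.mem_jacobson_bot_iff_exists_mul_eq_one]
  constructor
  · rintro h ⟨u, rfl⟩
    obtain ⟨z, hz⟩ := h (-↑u⁻¹)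
    simp at hz
  · intro hx y
    have hyx : ¬IsUnit (-(y * x)) := by
      rw [IsUnit.neg_iff, IsUnit.mul_iff]
      exact fun h => hx h.2
    exact ((isUnit_or_isUnit_of_add_one (a := y * x + 1) (by abel)).resolve_right
      hyx).exists_left_inv

theorem isUnit_add_of_mem_jacobson_bot {j u : R} (hj : j ∈ (⊥ : Ideal R).jacobson)
    (hu : IsUnit u) : IsUnit (j + u) :=
  (isUnit_or_isUnit_of_isUnit_add (b := -j) (by simpa using hu)).resolve_right
    (by rwa [IsUnit.neg_iff, ← mem_jacobson_bot_iff_not_isUnit])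

theorem mul_mem_jacobson_bot_iff {a b : R} :
    a * b ∈ (⊥ : Ideal R).jacobson ↔ a ∈ (⊥ : Ideal R).jacobson ∨ b ∈ (⊥ : Ideal R).jacobson := by
  simp only [mem_jacobson_bot_iff_not_isUnit, IsUnit.mul_iff, not_and_or]

theorem mem_jacobson_bot_of_mul_mul_mem {a b : R} (h : a * (a * b) ∈ (⊥ : Ideal R).jacobson) :
    a * b ∈ (⊥ : Ideal R).jacobson := by
  simpa only [mul_mem_jacobson_bot_iff, or_self_left] using h

end IsLocalRing

namespace FM

variable {R : Type*} [Ring R] {s : R}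

theorem a_mul_a_eq_one {Z U : FM R s} (h : Z * U = 1) (hc : U.c = 0) : Z.a * U.a = 1 := by
  simpa [hc] using congrArg FM.a h

theorem d_mul_d_eq_one {Z U : FM R s} (h : Z * U = 1) (hb : U.b = 0) : Z.d * U.d = 1 := by
  simpa [hb] using congrArg FM.d h

variable [Fact (∀ x : R, s * x = x * s)]

theorem commute_s (x : R) : Commute s x :=
  (Fact.out : ∀ x : R, s * x = x * s) x

theorem s_mul_s_mul (u v : R) : s * s * (u * v) = u * (s * (s * v)) := by
  rw [mul_assoc, (commute_s u).left_comm, (commute_s u).left_comm]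

theorem isUnit_upper (t : R) : IsUnit (⟨1, t, 0, 1⟩ : FM R s) :=
  ⟨⟨_, ⟨1, -t, 0, 1⟩, by ext <;> simp, by ext <;> simp⟩, rfl⟩

theorem isUnit_lower (t : R) : IsUnit (⟨1, 0, t, 1⟩ : FM R s) :=
  ⟨⟨_, ⟨1, 0, -t, 1⟩, by ext <;> simp, by ext <;> simp⟩, rfl⟩

theorem isUnit_diag {p q : R} (hp : IsUnit p) (hq : IsUnit q) :
    IsUnit (⟨p, 0, 0, q⟩ : FM R s) := by
  obtain ⟨p, rfl⟩ := hp
  obtain ⟨q, rfl⟩ := hq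
  exact ⟨⟨_, ⟨↑p⁻¹, 0, 0, ↑q⁻¹⟩, by ext <;> simp, by ext <;> simp⟩, rfl⟩

theorem isUnit_of_isUnit_schur {X : FM R s} (u : Rˣ) (hd : X.d = u)
    (hp : IsUnit (X.a - s * s * (X.b * ↑u⁻¹ * X.c))) : IsUnit X := by
  have hX : X = ⟨1, X.b * ↑u⁻¹, 0, 1⟩ *
      ⟨X.a - s * s * (X.b * ↑u⁻¹ * X.c), 0, 0, u⟩ * ⟨1, 0, ↑u⁻¹ * X.c, 1⟩ := by
    ext <;> simp [hd, mul_assoc]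
  rw [hX]
  exact ((isUnit_upper _).mul (isUnit_diag hp u.isUnit)).mul (isUnit_lower _)

theorem entries_mem_jacobson_bot {A : FM R s} (hA : A ∈ (⊥ : Ideal (FM R s)).jacobson) :
    A.a ∈ (⊥ : Ideal R).jacobson ∧ A.d ∈ (⊥ : Ideal R).jacobson ∧
      s * (s * A.b) ∈ (⊥ : Ideal R).jacobson ∧ s * (s * A.c) ∈ (⊥ : Ideal R).jacobson := by
  rw [Ideal.mem_jacobson_bot_iff_exists_mul_eq_one] at hA
  simp only [Ideal.mem_jacobson_bot_iff_exists_mul_eq_one]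
  refine ⟨fun r => ?_, fun r => ?_, fun r => ?_, fun r => ?_⟩
  · obtain ⟨Z, hZ⟩ := hA ⟨r, 0, 0, 0⟩
    exact ⟨Z.a, by simpa using a_mul_a_eq_one hZ (by simp)⟩
  · obtain ⟨Z, hZ⟩ := hA ⟨0, 0, 0, r⟩
    exact ⟨Z.d, by simpa using d_mul_d_eq_one hZ (by simp)⟩
  · obtain ⟨Z, hZ⟩ := hA ⟨0, 0, r, 0⟩
    exact ⟨Z.d, by simpa [s_mul_s_mul] using d_mul_d_eq_one hZ (by simp)⟩
  · obtain ⟨Z, hZ⟩ := hA ⟨0, r, 0, 0⟩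
    exact ⟨Z.a, by simpa [s_mul_s_mul] using a_mul_a_eq_one hZ (by simp)⟩

variable [IsLocalRing R]

theorem isUnit_of_isUnit_a_d {X : FM R s} (ha : IsUnit X.a) (hd : IsUnit X.d)
    (hc : s * X.c ∈ (⊥ : Ideal R).jacobson) : IsUnit X := by
  obtain ⟨u, hu⟩ := hd
  refine isUnit_of_isUnit_schur u hu.symm ?_
  rw [sub_eq_neg_add, s_mul_s_mul]
  exact IsLocalRing.isUnit_add_of_mem_jacobson_bot
    (neg_mem (Ideal.mul_mem_left _ _ (Ideal.mul_mem_left _ _ hc))) ha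

theorem mem_jacobson_bot_of_entries {A : FM R s} (ha : A.a ∈ (⊥ : Ideal R).jacobson)
    (hd : A.d ∈ (⊥ : Ideal R).jacobson) (hb : s * A.b ∈ (⊥ : Ideal R).jacobson)
    (hc : s * A.c ∈ (⊥ : Ideal R).jacobson) : A ∈ (⊥ : Ideal (FM R s)).jacobson := by
  rw [Ideal.mem_jacobson_bot_iff_exists_mul_eq_one]
  intro Y
  refine (isUnit_of_isUnit_a_d ?_ ?_ ?_).exists_left_inv
  · simp only [add_a, mul_a, one_a, s_mul_s_mul]
    exact IsLocalRing.isUnit_add_of_mem_jacobson_bot (add_mem (Ideal.mul_mem_left _ _ ha)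
      (Ideal.mul_mem_left _ _ (Ideal.mul_mem_left _ _ hc))) isUnit_one
  · simp only [add_d, mul_d, one_d, s_mul_s_mul]
    exact IsLocalRing.isUnit_add_of_mem_jacobson_bot (add_mem
      (Ideal.mul_mem_left _ _ (Ideal.mul_mem_left _ _ hb)) (Ideal.mul_mem_left _ _ hd)) isUnit_one
  · simp only [add_c, mul_c, one_c, add_zero]
    rw [mul_add, ← mul_assoc, (commute_s _).left_comm]
    exact add_mem (Ideal.mul_mem_left _ _ ha) (Ideal.mul_mem_left _ _ hc)

end FM

theorem stmt5 {R : Type*} [Ring R] [IsLocalRing R] (s : R)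
    [Fact (∀ x : R, s * x = x * s)] (A : FM R s) :
    A ∈ (⊥ : Ideal (FM R s)).jacobson ↔
      A.a ∈ (⊥ : Ideal R).jacobson ∧ A.d ∈ (⊥ : Ideal R).jacobson ∧
        s * A.b ∈ (⊥ : Ideal R).jacobson ∧ s * A.c ∈ (⊥ : Ideal R).jacobson := by
  constructor
  · intro hA
    obtain ⟨ha, hd, hb, hc⟩ := FM.entries_mem_jacobson_bot hA
    exact ⟨ha, hd, IsLocalRing.mem_jacobson_bot_of_mul_mul_mem hb,
      IsLocalRing.mem_jacobson_bot_of_mul_mul_mem hc⟩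
  · rintro ⟨ha, hd, hb, hc⟩
    exact FM.mem_jacobson_bot_of_entries ha hd hb hc
end

section
/- Let R be a local ring and s a central element of R lying in J(R). Then the Jacobson radical of the formal matrix ring M₂(R;s) is the set of matrices [[a,b],[c,d]] with a, d ∈ J(R) and b, c ∈ R arbitrary; moreover, a matrix [[a,x],[y,b]] ∈ M₂(R;s) is a unit if and only if a and b are units of R. -/
/-
Since `s ∈ J(R)`, every element `1 - s²w` is a unit of `R`. Hence for `X * Y = 1` the
diagonal products `X.a * Y.a = 1 - s²(X.b * Y.c)` and `X.d * Y.d = 1 - s²(X.c * Y.b)` are units,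
so the diagonal entries of a unit are units. Conversely, if `a` and `d` are units then
`[[a,b],[c,d]] = diag(a,d) · [[1,p],[q,1]]`, and `[[1,p],[q,1]]` is a unit because multiplying it
by `[[1,-p],[-q,1]]` on either side gives the diagonal unit `diag(1 - s²pq, 1 - s²qp)`.
The radical is then read off from `x ∈ J ↔ ∀ y, IsUnit (y * x + 1)`: the diagonal entries of
`Y * A + 1` are `Y.a * A.a + 1` and `Y.d * A.d + 1` up to summands in `s²R ⊆ J(R)`.
-/

theorem isUnit_of_mul_isUnit_left_of_mul_isUnit_right {M : Type*} [Monoid M] {a x y : M}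
    (hax : IsUnit (a * x)) (hya : IsUnit (y * a)) : IsUnit a := by
  obtain ⟨r, har⟩ := hax.exists_right_inv
  obtain ⟨l, hla⟩ := hya.exists_left_inv
  rw [mul_assoc] at har
  rw [← mul_assoc] at hla
  have hlr : l * y = x * r := left_inv_eq_right_inv hla har
  exact isUnit_iff_exists.mpr ⟨x * r, har, hlr ▸ hla⟩

namespace Ideal

variable {R : Type*} [Ring R]

theorem mem_jacobson_bot_iff_isUnit_mul_add_one {x : R} :
    x ∈ (⊥ : Ideal R).jacobson ↔ ∀ y, IsUnit (y * x + 1) := by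
  simp only [mem_jacobson_iff, mem_bot, sub_eq_zero]
  constructor
  · intro hx y
    have hleft : ∀ y, ∃ z, z * (y * x + 1) = 1 := fun y => by
      obtain ⟨z, hz⟩ := hx y
      exact ⟨z, by rw [mul_add_one, ← mul_assoc, hz]⟩
    obtain ⟨z, hz⟩ := hleft y
    obtain ⟨w, hw⟩ := hleft (-(z * y))
    -- the left inverse `z = 1 - z y x` is again of the form `y' x + 1`, so it is left invertible
    have hz_eq : -(z * y) * x + 1 = z := by rw [← hz]; noncomm_ring
    rw [hz_eq] at hw
    obtain rfl : w = y * x + 1 := left_inv_eq_right_inv hw hz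
    exact isUnit_iff_exists.mpr ⟨z, hw, hz⟩
  · intro h y
    obtain ⟨z, hz⟩ := (h y).exists_left_inv
    exact ⟨z, by rw [mul_assoc, ← mul_add_one, hz]⟩

theorem isUnit_add_one_of_mem_jacobson_bot {x : R} (hx : x ∈ (⊥ : Ideal R).jacobson) :
    IsUnit (x + 1) := by
  simpa using mem_jacobson_bot_iff_isUnit_mul_add_one.mp hx 1

theorem mul_self_mul_mem_jacobson_bot {s : R} (hs : s ∈ (⊥ : Ideal R).jacobson) (w : R) :
    s * s * w ∈ (⊥ : Ideal R).jacobson :=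
  mul_mem_right w _ (mul_mem_left _ s hs)

theorem isUnit_one_sub_mul_self_mul {s : R} (hs : s ∈ (⊥ : Ideal R).jacobson) (w : R) :
    IsUnit (1 - s * s * w) := by
  simpa [neg_add_eq_sub] using
    isUnit_add_one_of_mem_jacobson_bot (neg_mem (mul_self_mul_mem_jacobson_bot hs w))

end Ideal

namespace FM

open Ideal

variable {R : Type*} [Ring R] {s : R}

theorem isUnit_a_mul_a_and_d_mul_d_of_mul_eq_one (hs : s ∈ (⊥ : Ideal R).jacobson)
    {X Y : FM R s} (h : X * Y = 1) : IsUnit (X.a * Y.a) ∧ IsUnit (X.d * Y.d) := by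
  have ha : X.a * Y.a = 1 - s * s * (X.b * Y.c) := eq_sub_of_add_eq (congrArg FM.a h)
  have hd : X.d * Y.d = 1 - s * s * (X.c * Y.b) := eq_sub_of_add_eq' (congrArg FM.d h)
  rw [ha, hd]
  exact ⟨isUnit_one_sub_mul_self_mul hs _, isUnit_one_sub_mul_self_mul hs _⟩

variable [Fact (∀ x : R, s * x = x * s)]

theorem isUnit_mk_diag {u v : R} (hu : IsUnit u) (hv : IsUnit v) :
    IsUnit (⟨u, 0, 0, v⟩ : FM R s) := by
  refine isUnit_iff_exists.mpr ⟨⟨↑hu.unit⁻¹, 0, 0, ↑hv.unit⁻¹⟩, ?_, ?_⟩ <;> ext <;> simp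

theorem isUnit_mk_one_one (hs : s ∈ (⊥ : Ideal R).jacobson) (p q : R) :
    IsUnit (⟨1, p, q, 1⟩ : FM R s) := by
  have hD : IsUnit (⟨1 - s * s * (p * q), 0, 0, 1 - s * s * (q * p)⟩ : FM R s) :=
    isUnit_mk_diag (isUnit_one_sub_mul_self_mul hs _) (isUnit_one_sub_mul_self_mul hs _)
  have hMN : (⟨1, p, q, 1⟩ : FM R s) * ⟨1, -p, -q, 1⟩ =
      ⟨1 - s * s * (p * q), 0, 0, 1 - s * s * (q * p)⟩ := by
    ext <;> simp only [mul_a, mul_b, mul_c, mul_d] <;> noncomm_ring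
  have hNM : (⟨1, -p, -q, 1⟩ : FM R s) * ⟨1, p, q, 1⟩ =
      ⟨1 - s * s * (p * q), 0, 0, 1 - s * s * (q * p)⟩ := by
    ext <;> simp only [mul_a, mul_b, mul_c, mul_d] <;> noncomm_ring
  exact isUnit_of_mul_isUnit_left_of_mul_isUnit_right (hMN ▸ hD) (hNM ▸ hD)

theorem isUnit_iff (hs : s ∈ (⊥ : Ideal R).jacobson) {A : FM R s} :
    IsUnit A ↔ IsUnit A.a ∧ IsUnit A.d := by
  constructor
  · intro hA
    obtain ⟨B, hAB, hBA⟩ := isUnit_iff_exists.mp hA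
    obtain ⟨haB, hdB⟩ := isUnit_a_mul_a_and_d_mul_d_of_mul_eq_one hs hAB
    obtain ⟨hBa, hBd⟩ := isUnit_a_mul_a_and_d_mul_d_of_mul_eq_one hs hBA
    exact ⟨isUnit_of_mul_isUnit_left_of_mul_isUnit_right haB hBa,
      isUnit_of_mul_isUnit_left_of_mul_isUnit_right hdB hBd⟩
  · rintro ⟨ha, hd⟩
    have hfactor : A =
        (⟨A.a, 0, 0, A.d⟩ : FM R s) * ⟨1, ↑ha.unit⁻¹ * A.b, ↑hd.unit⁻¹ * A.c, 1⟩ := by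
      ext <;> simp [← mul_assoc]
    rw [hfactor]
    exact (isUnit_mk_diag ha hd).mul (isUnit_mk_one_one hs _ _)

theorem mem_jacobson_bot_iff (hs : s ∈ (⊥ : Ideal R).jacobson) {A : FM R s} :
    A ∈ (⊥ : Ideal (FM R s)).jacobson ↔
      A.a ∈ (⊥ : Ideal R).jacobson ∧ A.d ∈ (⊥ : Ideal R).jacobson := by
  rw [mem_jacobson_bot_iff_isUnit_mul_add_one]
  constructor
  · intro hA
    refine ⟨mem_jacobson_bot_iff_isUnit_mul_add_one.mpr fun y => ?_,
      mem_jacobson_bot_iff_isUnit_mul_add_one.mpr fun y => ?_⟩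
    · simpa using ((isUnit_iff hs).mp (hA ⟨y, 0, 0, 0⟩)).1
    · simpa using ((isUnit_iff hs).mp (hA ⟨0, 0, 0, y⟩)).2
  · rintro ⟨ha, hd⟩ Y
    exact (isUnit_iff hs).mpr
      ⟨isUnit_add_one_of_mem_jacobson_bot
        (add_mem (mul_mem_left _ _ ha) (mul_self_mul_mem_jacobson_bot hs _)),
      isUnit_add_one_of_mem_jacobson_bot
        (add_mem (mul_self_mul_mem_jacobson_bot hs _) (mul_mem_left _ _ hd))⟩

end FM

theorem stmt6_general {R : Type*} [Ring R] (s : R)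
    [Fact (∀ x : R, s * x = x * s)] (hsJ : s ∈ (⊥ : Ideal R).jacobson) :
    (∀ A : FM R s, A ∈ (⊥ : Ideal (FM R s)).jacobson ↔
      A.a ∈ (⊥ : Ideal R).jacobson ∧ A.d ∈ (⊥ : Ideal R).jacobson) ∧
    (∀ A : FM R s, IsUnit A ↔ IsUnit A.a ∧ IsUnit A.d) :=
  ⟨fun _ => FM.mem_jacobson_bot_iff hsJ, fun _ => FM.isUnit_iff hsJ⟩

theorem stmt6 {R : Type*} [Ring R] [IsLocalRing R] (s : R)
    [Fact (∀ x : R, s * x = x * s)] (hsJ : s ∈ (⊥ : Ideal R).jacobson) :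
    (∀ A : FM R s, A ∈ (⊥ : Ideal (FM R s)).jacobson ↔
      A.a ∈ (⊥ : Ideal R).jacobson ∧ A.d ∈ (⊥ : Ideal R).jacobson) ∧
    (∀ A : FM R s, IsUnit A ↔ IsUnit A.a ∧ IsUnit A.d) :=
  stmt6_general s hsJ
end

section
/- Let R be a local ring and s a central element of R lying in J(R). For A ∈ M₂(R;s), if Aⁿ ∈ J(M₂(R;s)) for some natural number n ≥ 1, then A ∈ J(M₂(R;s)). -/
/-!
Since `s ∈ J(R)`, reducing the diagonal entries modulo `J(R)` is a ring homomorphism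
`M₂(R;s) → (R/J(R))²`, and its kernel is exactly `J(M₂(R;s))`: for `x` in the kernel, `1 + y x`
has unit diagonal entries, and such an element has a left inverse built from Schur complements.
When `R` is local, `J(R)` is the set of nonunits, so `R/J(R)` is reduced; hence `Aⁿ` in the
kernel forces `A` into the kernel.
-/

section Jacobson

variable {R : Type*} [Ring R]

theorem isUnit_one_add_of_mem_jacobson {j : R} (hj : j ∈ Ring.jacobson R) : IsUnit (1 + j) := by
  rw [← Ideal.jacobson_bot] at hj
  obtain ⟨z, hz⟩ := Ideal.exists_mul_add_sub_mem_of_mem_jacobson j hj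
  rw [Ideal.mem_bot, sub_eq_zero] at hz
  -- The left inverse `z = 1 - z * j` of `1 + j` is again of this form, so it has a left
  -- inverse `z'`, and then `z' = 1 + j` makes `z` a two-sided inverse.
  have hz_eq : -(z * j) + 1 = z := by rw [← hz]; noncomm_ring
  obtain ⟨z', hz'⟩ := Ideal.exists_mul_add_sub_mem_of_mem_jacobson (-(z * j))
    (neg_mem (Ideal.mul_mem_left _ z hj))
  rw [Ideal.mem_bot, sub_eq_zero, hz_eq] at hz'
  have hz'_eq : z' = j + 1 :=
    calc z' = z' * (z * (j + 1)) := by rw [hz, mul_one]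
      _ = j + 1 := by rw [← mul_assoc, hz', one_mul]
  rw [add_comm]
  exact ⟨⟨j + 1, z, hz'_eq ▸ hz', hz⟩, rfl⟩

theorem IsUnit.add_of_mem_jacobson {u j : R} (hu : IsUnit u) (hj : j ∈ Ring.jacobson R) :
    IsUnit (u + j) := by
  obtain ⟨v, rfl⟩ := hu
  have : (v : R) + j = v * (1 + ↑v⁻¹ * j) := by
    rw [mul_add, mul_one, ← mul_assoc, Units.mul_inv, one_mul]
  rw [this]
  exact v.isUnit.mul (isUnit_one_add_of_mem_jacobson (Ideal.mul_mem_left _ _ hj))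

theorem Ring.map_eq_zero_of_mem_jacobson {S : Type*} [Ring S] {f : R →+* S}
    (hf : Function.Surjective f) (hS : Ring.jacobson S = ⊥) {x : R} (hx : x ∈ Ring.jacobson R) :
    f x = 0 := by
  have : RingHomSurjective f := ⟨hf⟩
  simpa [hS] using Ring.le_comap_jacobson f hx

end Jacobson

namespace IsLocalRing

variable {R : Type*} [Ring R] [IsLocalRing R]

theorem isUnit_of_mul_eq_one {a b : R} (h : a * b = 1) : IsUnit b := by
  -- `b * a` is idempotent, and a local ring has no idempotents other than `0` and `1`.
  have he : IsIdempotentElem (b * a) := by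
    rw [IsIdempotentElem, mul_assoc, ← mul_assoc a, h, one_mul]
  rcases isUnit_or_isUnit_of_add_one (add_sub_cancel (b * a) 1) with hu | hu
  · have hba : b * a = 1 := (IsIdempotentElem.iff_eq_one_of_isUnit hu).mp he
    exact ⟨⟨b, a, hba, h⟩, rfl⟩
  · have hba : b * a = 0 :=
      sub_eq_self.mp ((IsIdempotentElem.iff_eq_one_of_isUnit hu).mp he.one_sub)
    refine absurd ?_ (one_ne_zero (α := R))
    calc (1 : R) = a * b * (a * b) := by rw [h, one_mul]
      _ = a * (b * a) * b := by simp only [mul_assoc]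
      _ = 0 := by rw [hba, mul_zero, zero_mul]

theorem mem_jacobson_iff {x : R} : x ∈ Ring.jacobson R ↔ ¬IsUnit x := by
  refine ⟨fun hx => coe_subset_nonunits (Ring.jacobson_lt_top R).ne hx, fun hx => ?_⟩
  rw [← Ideal.jacobson_bot, Ideal.mem_jacobson_iff]
  intro y
  obtain ⟨u, hu⟩ : IsUnit (y * x + 1) := by
    refine (isUnit_or_isUnit_of_add_one (a := y * x + 1) (b := -(y * x)) (by abel)).resolve_right
      fun hyx => ?_
    obtain ⟨v, hv⟩ := (IsUnit.neg_iff _).mp hyx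
    exact hx (isUnit_of_mul_eq_one (a := ↑v⁻¹ * y) (by rw [mul_assoc, ← hv, v.inv_mul]))
  refine ⟨↑u⁻¹, ?_⟩
  rw [Ideal.mem_bot, mul_assoc, sub_eq_zero, ← mul_add_one, ← hu, Units.inv_mul]

instance : IsReduced (R ⧸ Ring.jacobson R) := by
  refine ⟨fun x ⟨n, hn⟩ => ?_⟩
  obtain ⟨r, rfl⟩ := Ideal.Quotient.mk_surjective x
  rw [← map_pow, Ideal.Quotient.eq_zero_iff_mem, mem_jacobson_iff] at hn
  rw [Ideal.Quotient.eq_zero_iff_mem, mem_jacobson_iff]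
  exact fun hr => hn (hr.pow n)

end IsLocalRing

namespace FM

variable {R : Type*} [Ring R] {s : R} [Fact (∀ x : R, s * x = x * s)]

def diagMod (I : Ideal R) [I.IsTwoSided] (hs : s ∈ I) : FM R s →+* (R ⧸ I) × (R ⧸ I) where
  toFun x := (Ideal.Quotient.mk I x.a, Ideal.Quotient.mk I x.d)
  map_one' := by simp
  map_zero' := by simp
  map_add' x y := by simp
  map_mul' x y := by
    have hss (t : R) : Ideal.Quotient.mk I (s * s * t) = 0 :=
      Ideal.Quotient.eq_zero_iff_mem.mpr (I.mul_mem_right t (I.mul_mem_left s hs))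
    ext <;> simp [hss]

theorem diagMod_surjective {I : Ideal R} [I.IsTwoSided] (hs : s ∈ I) :
    Function.Surjective (diagMod I hs) := by
  rintro ⟨p, q⟩
  obtain ⟨a, rfl⟩ := Ideal.Quotient.mk_surjective p
  obtain ⟨d, rfl⟩ := Ideal.Quotient.mk_surjective q
  exact ⟨⟨a, 0, 0, d⟩, rfl⟩

theorem exists_mul_eq_one_of_isUnit (hs : s ∈ Ring.jacobson R) {w : FM R s}
    (ha : IsUnit w.a) (hd : IsUnit w.d) : ∃ z : FM R s, z * w = 1 := by
  have hss (t : R) : s * s * t ∈ Ring.jacobson R :=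
    Ideal.mul_mem_right t _ (Ideal.mul_mem_left _ s hs)
  have hcomm (x : R) : Commute (s * s) x :=
    have hsx : Commute s x := Fact.out (p := ∀ x : R, s * x = x * s) x
    hsx.mul_left hsx
  obtain ⟨α, hα⟩ := ha
  obtain ⟨δ, hδ⟩ := hd
  -- `α'` and `δ'` are the Schur complements of `w.d` and `w.a`.
  obtain ⟨α', hα'⟩ : IsUnit (w.a - s * s * (w.b * ↑δ⁻¹ * w.c)) := by
    rw [sub_eq_add_neg, ← hα]
    exact α.isUnit.add_of_mem_jacobson (neg_mem (hss _))
  obtain ⟨δ', hδ'⟩ : IsUnit (w.d - s * s * (w.c * ↑α⁻¹ * w.b)) := by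
    rw [sub_eq_add_neg, ← hδ]
    exact δ.isUnit.add_of_mem_jacobson (neg_mem (hss _))
  refine ⟨⟨↑α'⁻¹, -(↑α'⁻¹ * w.b * ↑δ⁻¹), -(↑δ'⁻¹ * w.c * ↑α⁻¹), ↑δ'⁻¹⟩, ?_⟩
  ext <;> simp only [mul_a, mul_b, mul_c, mul_d, one_a, one_b, one_c, one_d]
  · calc _ = ↑α'⁻¹ * (w.a - s * s * (w.b * ↑δ⁻¹ * w.c)) := by
          rw [mul_sub, ← (hcomm _).left_comm]; noncomm_ring
      _ = 1 := by rw [← hα', Units.inv_mul]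
  · rw [← hδ, neg_mul, Units.inv_mul_cancel_right, add_neg_cancel]
  · rw [← hα, neg_mul, Units.inv_mul_cancel_right, neg_add_cancel]
  · calc _ = ↑δ'⁻¹ * (w.d - s * s * (w.c * ↑α⁻¹ * w.b)) := by
          rw [mul_sub, ← (hcomm _).left_comm]; noncomm_ring
      _ = 1 := by rw [← hδ', Units.inv_mul]

theorem jacobson_eq_ker_diagMod (hs : s ∈ Ring.jacobson R) :
    Ring.jacobson (FM R s) = RingHom.ker (diagMod (Ring.jacobson R) hs) := by
  set φ := diagMod (Ring.jacobson R) hs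
  refine le_antisymm (fun x hx => ?_) (fun x hx => ?_)
  · have hφ := diagMod_surjective hs
    have hR := Ring.jacobson_quotient_jacobson R
    exact Prod.ext
      (Ring.map_eq_zero_of_mem_jacobson (f := (RingHom.fst _ _).comp φ)
        (Prod.fst_surjective.comp hφ) hR hx)
      (Ring.map_eq_zero_of_mem_jacobson (f := (RingHom.snd _ _).comp φ)
        (Prod.snd_surjective.comp hφ) hR hx)
  · rw [← Ideal.jacobson_bot, Ideal.mem_jacobson_iff]
    intro y
    have hyx : φ (y * x) = 0 := Ideal.mul_mem_left _ y hx
    have ha : IsUnit (y * x + 1).a := by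
      rw [add_a, one_a, add_comm]
      exact isUnit_one.add_of_mem_jacobson
        (Ideal.Quotient.eq_zero_iff_mem.mp (congrArg Prod.fst hyx))
    have hd : IsUnit (y * x + 1).d := by
      rw [add_d, one_d, add_comm]
      exact isUnit_one.add_of_mem_jacobson
        (Ideal.Quotient.eq_zero_iff_mem.mp (congrArg Prod.snd hyx))
    obtain ⟨z, hz⟩ := exists_mul_eq_one_of_isUnit hs ha hd
    exact ⟨z, by rw [Ideal.mem_bot, mul_assoc, sub_eq_zero, ← mul_add_one, hz]⟩

end FM

theorem stmt8_general {R : Type*} [Ring R] [IsLocalRing R] (s : R)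
    [Fact (∀ x : R, s * x = x * s)] (hsJ : s ∈ (⊥ : Ideal R).jacobson)
    (A : FM R s) (n : ℕ) (h : A ^ n ∈ (⊥ : Ideal (FM R s)).jacobson) :
    A ∈ (⊥ : Ideal (FM R s)).jacobson := by
  rw [Ideal.jacobson_bot] at hsJ h ⊢
  rw [FM.jacobson_eq_ker_diagMod hsJ, RingHom.mem_ker] at h ⊢
  exact IsReduced.eq_zero _ ⟨n, by rwa [map_pow] at h⟩

theorem stmt8 {R : Type*} [Ring R] [IsLocalRing R] (s : R)
    [Fact (∀ x : R, s * x = x * s)] (hsJ : s ∈ (⊥ : Ideal R).jacobson)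
    (A : FM R s) (n : ℕ) (hn : 1 ≤ n) (h : A ^ n ∈ (⊥ : Ideal (FM R s)).jacobson) :
    A ∈ (⊥ : Ideal (FM R s)).jacobson :=
  stmt8_general s hsJ A n h
end

section
/- Let R be a local ring and s a central element of R with s ∈ J(R). Every non-trivial idempotent E of M₂(R;s) is similar either to [[1,0],[0,0]] or to [[0,0],[0,1]]. -/
theorem IsUnit.add_of_mem_jacobson_bot {R : Type*} [Ring R] {u j : R} (hu : IsUnit u)
    (hj : j ∈ (⊥ : Ideal R).jacobson) : IsUnit (u + j) := by
  obtain ⟨u, rfl⟩ := hu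
  have h : (u : R) + j = u * (↑u⁻¹ * j + 1) := by
    rw [mul_add, ← mul_assoc, u.mul_inv, one_mul, mul_one, add_comm]
  rw [h]
  exact u.isUnit.mul (Ideal.isUnit_add_one_of_mem_jacobson_bot (Ideal.mul_mem_left _ _ hj))

theorem IsIdempotentElem.mul_mul_add_mul_one_sub {A : Type*} [Ring A] {e f : A}
    (he : IsIdempotentElem e) (hf : IsIdempotentElem f) :
    e * (e * f + (1 - e) * (1 - f)) = (e * f + (1 - e) * (1 - f)) * f := by
  rw [mul_add, add_mul, ← mul_assoc, he.eq, ← mul_assoc, he.mul_one_sub_self, zero_mul, add_zero,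
    mul_assoc, hf.eq, mul_assoc, hf.one_sub_mul_self, mul_zero, add_zero]

theorem IsIdempotentElem.exists_units_conj_eq {A : Type*} [Ring A] {e f : A}
    (he : IsIdempotentElem e) (hf : IsIdempotentElem f)
    (hu : IsUnit (e * f + (1 - e) * (1 - f))) : ∃ u : Aˣ, ↑u⁻¹ * e * ↑u = f := by
  obtain ⟨u, hu⟩ := hu
  refine ⟨u, ?_⟩
  rw [mul_assoc, Units.inv_mul_eq_iff_eq_mul, hu, he.mul_mul_add_mul_one_sub hf]

namespace FM

variable {R : Type*} [Ring R] {s : R}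

@[simp] lemma sub_a (x y : FM R s) : (x - y).a = x.a - y.a := by
  rw [sub_eq_add_neg, sub_eq_add_neg]; rfl
@[simp] lemma sub_b (x y : FM R s) : (x - y).b = x.b - y.b := by
  rw [sub_eq_add_neg, sub_eq_add_neg]; rfl
@[simp] lemma sub_c (x y : FM R s) : (x - y).c = x.c - y.c := by
  rw [sub_eq_add_neg, sub_eq_add_neg]; rfl
@[simp] lemma sub_d (x y : FM R s) : (x - y).d = x.d - y.d := by
  rw [sub_eq_add_neg, sub_eq_add_neg]; rfl

variable [Fact (∀ x : R, s * x = x * s)]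

lemma isUnit_mk_upper (t : R) : IsUnit (FM.mk 1 t 0 1 : FM R s) :=
  ⟨⟨FM.mk 1 t 0 1, FM.mk 1 (-t) 0 1, by ext <;> simp, by ext <;> simp⟩, rfl⟩

lemma isUnit_mk_lower (r : R) : IsUnit (FM.mk 1 0 r 1 : FM R s) :=
  ⟨⟨FM.mk 1 0 r 1, FM.mk 1 0 (-r) 1, by ext <;> simp, by ext <;> simp⟩, rfl⟩

lemma isUnit_mk_diag_s11 {p w : R} (hp : IsUnit p) (hw : IsUnit w) :
    IsUnit (FM.mk p 0 0 w : FM R s) := by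
  obtain ⟨p, rfl⟩ := hp
  obtain ⟨w, rfl⟩ := hw
  exact ⟨⟨FM.mk p 0 0 w, FM.mk ↑p⁻¹ 0 0 ↑w⁻¹, by ext <;> simp, by ext <;> simp⟩, rfl⟩

theorem isUnit_of_isUnit_a_of_isUnit_d (hsJ : s ∈ (⊥ : Ideal R).jacobson) {x : FM R s}
    (ha : IsUnit x.a) (hd : IsUnit x.d) : IsUnit x := by
  obtain ⟨p, hp⟩ := ha
  set w := x.d + -(s * (s * (x.c * (↑p⁻¹ * x.b)))) with hw_def
  have hw : IsUnit w :=
    hd.add_of_mem_jacobson_bot (neg_mem (Ideal.mul_mem_left _ _ (Ideal.mul_mem_right _ _ hsJ)))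
  have hLDU : x = FM.mk 1 0 (x.c * ↑p⁻¹) 1 * (FM.mk x.a 0 0 w * FM.mk 1 (↑p⁻¹ * x.b) 0 1) := by
    ext <;> simp [hw_def, ← hp, mul_assoc]
  rw [hLDU]
  exact (isUnit_mk_lower _).mul ((isUnit_mk_diag_s11 ⟨p, hp⟩ hw).mul (isUnit_mk_upper _))

theorem exists_units_conj_eq_mk_one_zero_zero_zero (hsJ : s ∈ (⊥ : Ideal R).jacobson)
    {E : FM R s} (hE : IsIdempotentElem E) (ha : IsUnit E.a) (hd : IsUnit (1 - E.d)) :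
    ∃ u : (FM R s)ˣ, (↑u⁻¹ : FM R s) * E * (u : FM R s) = FM.mk 1 0 0 0 := by
  have he₁₁ : IsIdempotentElem (FM.mk 1 0 0 0 : FM R s) := by ext <;> simp
  refine hE.exists_units_conj_eq he₁₁ (isUnit_of_isUnit_a_of_isUnit_d hsJ ?_ ?_) <;> simpa

end FM

theorem stmt11 {R : Type*} [Ring R] [IsLocalRing R] (s : R)
    [Fact (∀ x : R, s * x = x * s)] (hsJ : s ∈ (⊥ : Ideal R).jacobson)
    (E : FM R s) (hE : IsIdempotentElem E) (h0 : E ≠ 0) (h1 : E ≠ 1) :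
    (∃ u : (FM R s)ˣ, ((u⁻¹ : (FM R s)ˣ) : FM R s) * E * (u : FM R s) = FM.mk 1 0 0 0) ∨
    (∃ u : (FM R s)ˣ, ((u⁻¹ : (FM R s)ˣ) : FM R s) * E * (u : FM R s) = FM.mk 0 0 0 1) := by
  have hsplit (r : R) : IsUnit r ∨ IsUnit (1 - r) :=
    IsLocalRing.isUnit_or_isUnit_of_add_one (add_sub_cancel r 1)
  rcases hsplit E.a with ha | ha <;> rcases hsplit E.d with hd | hd
  · have hunit : IsUnit E := FM.isUnit_of_isUnit_a_of_isUnit_d hsJ ha hd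
    exact (h1 ((IsIdempotentElem.iff_eq_one_of_isUnit hunit).mp hE)).elim
  · exact .inl (FM.exists_units_conj_eq_mk_one_zero_zero_zero hsJ hE ha hd)
  · obtain ⟨u, hu⟩ := FM.exists_units_conj_eq_mk_one_zero_zero_zero hsJ hE.one_sub
      (by simpa using ha) (by simpa using hd)
    refine .inr ⟨u, ?_⟩
    rw [mul_sub, sub_mul, mul_one, u.inv_mul] at hu
    rw [← sub_sub_cancel 1 (↑u⁻¹ * E * ↑u), hu]
    ext <;> simp
  · have hunit : IsUnit (1 - E) := FM.isUnit_of_isUnit_a_of_isUnit_d hsJ (by simpa) (by simpa)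
    have hE0 : 1 - E = 1 := (IsIdempotentElem.iff_eq_one_of_isUnit hunit).mp hE.one_sub
    exact (h0 (sub_eq_self.mp hE0)).elim
end

section
/- Let R be a commutative local ring and s a unit of R. Then the formal matrix ring M₂(R;s) is not strongly J-clean; specifically, the matrix [[1,1],[1,0]] is not strongly J-clean in M₂(R;s). -/
/-!
If `x = e + j` with `e` idempotent, `j` in the Jacobson radical and `ej = je`, then
`x² - x = (2e + j - 1) j` lies in the Jacobson radical, so it cannot be a unit in a nontrivial
ring. For `x = [[1,1],[1,0]]` in `M₂(R;s)` one computes `x² - x = s² · 1`, a unit when `s` is.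
-/

theorem IsStronglyJClean.mul_self_sub_mem_jacobson {A : Type*} [Ring A] {x : A}
    (hx : IsStronglyJClean x) : x * x - x ∈ (⊥ : Ideal A).jacobson := by
  obtain ⟨e, he, hcomm, hj⟩ := hx
  set j := x - e
  have hje : j * e = e * j := by simp only [j, sub_mul, mul_sub, hcomm]
  have hfactor : x * x - x = (e + j - 1 + e) * j := by
    have hx : x = e + j := by simp [j]
    calc x * x - x = (e * e - e) + e * j + j * e + j * j - j := by rw [hx]; noncomm_ring
      _ = (e + j - 1 + e) * j := by rw [he.eq, hje]; noncomm_ring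
  rw [hfactor]
  exact Ideal.mul_mem_left _ _ hj

theorem not_isStronglyJClean_of_isUnit_mul_self_sub {A : Type*} [Ring A] [Nontrivial A] {x : A}
    (hx : IsUnit (x * x - x)) : ¬ IsStronglyJClean x := fun hclean =>
  bot_ne_top <| Ideal.jacobson_eq_top_iff.mp <|
    Ideal.eq_top_of_isUnit_mem _ hclean.mul_self_sub_mem_jacobson hx

namespace FM

variable {R : Type*} [Ring R] {s : R}

instance [Nontrivial R] : Nontrivial (FM R s) :=
  ⟨⟨0, 1, fun h => zero_ne_one (congrArg FM.a h)⟩⟩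

variable [Fact (∀ x : R, s * x = x * s)]

def scalar : R →+* FM R s where
  toFun r := ⟨r, 0, 0, r⟩
  map_one' := rfl
  map_mul' r r' := by ext <;> simp
  map_zero' := rfl
  map_add' r r' := by ext <;> simp

theorem mk_one_one_one_zero_mul_self_sub :
    (FM.mk (1 : R) 1 1 0 : FM R s) * FM.mk 1 1 1 0 - FM.mk 1 1 1 0 = scalar (s * s) := by
  ext <;> simp [scalar, sub_eq_add_neg]

end FM

theorem stmt13 {R : Type*} [CommRing R] [IsLocalRing R] (s : R) (hs : IsUnit s) :
    (¬ ∀ A : FM R s, IsStronglyJClean A) ∧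
      ¬ IsStronglyJClean (FM.mk (1 : R) 1 1 0 : FM R s) := by
  have hx : ¬ IsStronglyJClean (FM.mk (1 : R) 1 1 0 : FM R s) := by
    apply not_isStronglyJClean_of_isUnit_mul_self_sub
    rw [FM.mk_one_one_one_zero_mul_self_sub]
    exact (hs.mul hs).map FM.scalar
  exact ⟨fun hall => hx (hall _), hx⟩
end

section
/- Let R be a local ring with central element s. A matrix A ∈ M₂(R;s) is strongly clean if and only if A is a unit, or I₂ - A is a unit, or A is similar to a diagonal matrix diag(a,b) for some a, b ∈ R. -/
/-!
Over a local ring, an idempotent `e` of `M₂(R;s)` is `0`, `1`, or conjugate to `diag(1,0)` or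
`diag(0,1)`. If `e.a` and `1 - e.d` are units, then `1 - (e - diag(1,0))² = diag(e.a, 1 - e.d)`
is a unit, which makes `diag(1,0) e + (1 - diag(1,0)) (1 - e)` a unit conjugating `e` to
`diag(1,0)`; the case where `1 - e.a` and `e.d` are units is the same statement for `1 - e`, and
otherwise `e` or `1 - e` has non-invertible diagonal entries and vanishes. Conjugating a strongly
clean decomposition `A = e + (A - e)` accordingly makes `A` commute with `diag(1,0)`, i.e.
diagonal. Conversely, every element of a local ring is strongly clean, hence so is every diagonal
matrix and each of its conjugates.
-/

namespace IsLocalRing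

variable {R : Type*} [Ring R] [IsLocalRing R]

theorem isUnit_or_isUnit_one_sub (a : R) : IsUnit a ∨ IsUnit (1 - a) :=
  isUnit_or_isUnit_of_add_one (add_sub_cancel a 1)

theorem eq_zero_of_isIdempotentElem {e : R} (he : IsIdempotentElem e) (h : ¬IsUnit e) : e = 0 :=
  ((isUnit_or_isUnit_one_sub e).resolve_left h).mul_left_eq_zero.1 he.mul_one_sub_self

/-- `b * a` is an idempotent; it cannot vanish since `1 = (a * b) ^ 2 = a * (b * a) * b`. -/
instance : IsDedekindFiniteMonoid R where
  mul_eq_one_symm {a b} hab := by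
    have hba : IsIdempotentElem (b * a) := by
      rw [IsIdempotentElem, mul_assoc, ← mul_assoc a, hab, one_mul]
    by_contra hne
    have hba0 : b * a = 0 := eq_zero_of_isIdempotentElem hba fun h =>
      hne ((IsIdempotentElem.iff_eq_one_of_isUnit h).1 hba)
    apply one_ne_zero (α := R)
    calc (1 : R) = a * (b * a) * b := by rw [← mul_assoc, hab, one_mul, hab]
      _ = 0 := by rw [hba0, mul_zero, zero_mul]

end IsLocalRing

section StronglyClean

variable {A : Type*} [Ring A]

theorem Commute.units_conj {x y : A} (h : Commute x y) (u : Aˣ) :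
    Commute (↑u⁻¹ * x * ↑u) (↑u⁻¹ * y * ↑u) := by
  simp only [Commute, SemiconjBy, mul_assoc, Units.mul_inv_cancel_left]
  rw [← mul_assoc x, h.eq, mul_assoc]

theorem IsIdempotentElem.units_conj {e : A} (he : IsIdempotentElem e) (u : Aˣ) :
    IsIdempotentElem (↑u⁻¹ * e * ↑u) := by
  simp only [IsIdempotentElem, mul_assoc, Units.mul_inv_cancel_left, he.mul_self_mul]

theorem IsUnit.isStronglyClean {x : A} (hx : IsUnit x) : IsStronglyClean x :=
  ⟨0, .zero, by rw [mul_zero, zero_mul], by rwa [sub_zero]⟩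

theorem isStronglyClean_of_isUnit_one_sub {x : A} (hx : IsUnit (1 - x)) : IsStronglyClean x :=
  ⟨1, .one, by rw [mul_one, one_mul], by rw [← neg_sub]; exact hx.neg⟩

theorem IsStronglyClean.units_conj {x : A} (hx : IsStronglyClean x) (u : Aˣ) :
    IsStronglyClean (↑u⁻¹ * x * ↑u) := by
  obtain ⟨e, he, hxe, hunit⟩ := hx
  refine ⟨↑u⁻¹ * e * ↑u, he.units_conj u, (Commute.units_conj hxe u).eq, ?_⟩
  rw [← sub_mul, ← mul_sub]
  exact (u⁻¹.isUnit.mul hunit).mul u.isUnit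

theorem isStronglyClean_units_conj_iff {x : A} (u : Aˣ) :
    IsStronglyClean (↑u⁻¹ * x * ↑u) ↔ IsStronglyClean x :=
  ⟨fun h => by simpa [mul_assoc] using h.units_conj u⁻¹, fun h => h.units_conj u⟩

theorem IsLocalRing.isStronglyClean [IsLocalRing A] (x : A) : IsStronglyClean x :=
  (isUnit_or_isUnit_one_sub x).elim IsUnit.isStronglyClean isStronglyClean_of_isUnit_one_sub

end StronglyClean

namespace IsIdempotentElem

variable {A : Type*} [Ring A] {e f : A}

/-- `f * e + (1 - f) * (1 - e)` intertwines `e` with `f`, and its product with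
`e * f + (1 - e) * (1 - f)` in either order is `1 - (e - f) ^ 2`. -/
theorem exists_units_conj_eq_of_isUnit (he : IsIdempotentElem e) (hf : IsIdempotentElem f)
    (h : IsUnit (1 - (e - f) ^ 2)) : ∃ u : Aˣ, ↑u⁻¹ * e * ↑u = f := by
  set v := f * e + (1 - f) * (1 - e)
  set v' := e * f + (1 - e) * (1 - f)
  have hvv' : v * v' = 1 - (e - f) ^ 2 := by
    simp only [v, v', sq, mul_add, add_mul, mul_sub, sub_mul, one_mul, mul_one, mul_assoc,
      he.mul_self_mul, he.eq, hf.eq]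
    abel
  have hv'v : v' * v = 1 - (e - f) ^ 2 := by
    simp only [v, v', sq, mul_add, add_mul, mul_sub, sub_mul, one_mul, mul_one, mul_assoc,
      hf.mul_self_mul, he.eq, hf.eq]
    abel
  have hve : v * e = f * v := by
    simp only [v, mul_add, add_mul, mul_sub, sub_mul, one_mul, mul_one, mul_assoc,
      hf.mul_self_mul, he.eq, hf.eq]
    abel
  obtain ⟨w, hw⟩ := h
  have hright : v * (v' * ↑w⁻¹) = 1 := by rw [← mul_assoc, hvv', ← hw, Units.mul_inv]
  have hleft : (↑w⁻¹ * v') * v = 1 := by rw [mul_assoc, hv'v, ← hw, Units.inv_mul]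
  let V : Aˣ := ⟨v, v' * ↑w⁻¹, hright, left_inv_eq_right_inv hleft hright ▸ hleft⟩
  refine ⟨V⁻¹, ?_⟩
  simp only [inv_inv]
  rw [show (↑V : A) * e = f * ↑V from hve, mul_assoc, Units.mul_inv, mul_one]

end IsIdempotentElem

namespace FM

variable {R : Type*} [Ring R] {s : R}

lemma isIdempotentElem_iff {e : FM R s} :
    IsIdempotentElem e ↔ e.a * e.a + s * s * (e.b * e.c) = e.a ∧ e.a * e.b + e.b * e.d = e.b ∧
      e.c * e.a + e.d * e.c = e.c ∧ s * s * (e.c * e.b) + e.d * e.d = e.d := by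
  simp only [IsIdempotentElem, FM.ext_iff, mul_a, mul_b, mul_c, mul_d]

lemma eq_diag_of_commute_diag_one_zero {B : FM R s} (h : Commute B (mk 1 0 0 0)) :
    B = mk B.a 0 0 B.d := by
  have hb := congrArg FM.b h.eq
  have hc := congrArg FM.c h.eq
  simp only [mul_b, mul_c, mul_zero, mul_one, zero_mul, one_mul, add_zero] at hb hc
  ext <;> simp [hb, hc]

/-- With `1 - d` invertible, the idempotent equations give `b = a * b * (1 - d)⁻¹` and
`c = (1 - d)⁻¹ * c * a`, whence `a = (a + y) * a` with `y` a nonunit multiple of `b`. -/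
lemma eq_zero_of_isIdempotentElem [IsLocalRing R] {e : FM R s} (he : IsIdempotentElem e)
    (ha : ¬IsUnit e.a) (hd : ¬IsUnit e.d) : e = 0 := by
  obtain ⟨E1, E2, E3, E4⟩ := isIdempotentElem_iff.1 he
  obtain ⟨u, hu⟩ := (IsLocalRing.isUnit_or_isUnit_one_sub e.d).resolve_left hd
  have hb : e.b = e.a * e.b * ↑u⁻¹ := by
    rw [← add_sub_cancel_right (e.a * e.b) (e.b * e.d), E2, ← mul_one_sub, ← hu,
      Units.mul_inv_cancel_right]
  have hc : e.c = ↑u⁻¹ * e.c * e.a := by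
    rw [mul_assoc, ← add_sub_cancel_right (e.c * e.a) (e.d * e.c), E3, ← one_sub_mul, ← hu,
      Units.inv_mul_cancel_left]
  have hy : ¬IsUnit (s * s * (e.b * (↑u⁻¹ * e.c))) := fun h => ha <| by
    rw [hb] at h
    exact isUnit_of_mul_isUnit_left (isUnit_of_mul_isUnit_left
      (isUnit_of_mul_isUnit_left (isUnit_of_mul_isUnit_right h)))
  have ha_eq : e.a = (e.a + s * s * (e.b * (↑u⁻¹ * e.c))) * e.a :=
    calc e.a = e.a * e.a + s * s * (e.b * (↑u⁻¹ * e.c * e.a)) := by rw [← hc, E1]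
      _ = (e.a + s * s * (e.b * (↑u⁻¹ * e.c))) * e.a := by simp only [add_mul, mul_assoc]
  have ha' : (1 - (e.a + s * s * (e.b * (↑u⁻¹ * e.c)))) * e.a = 0 := by
    rw [sub_mul, one_mul, ← ha_eq, sub_self]
  have ha0 : e.a = 0 := ((IsLocalRing.isUnit_or_isUnit_one_sub _).resolve_left
    (IsLocalRing.nonunits_add ha hy)).mul_right_eq_zero.1 ha'
  have hb0 : e.b = 0 := by rw [hb, ha0, zero_mul, zero_mul]
  have hc0 : e.c = 0 := by rw [hc, ha0, mul_zero]
  have hd0 : e.d = 0 := IsLocalRing.eq_zero_of_isIdempotentElem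
    (by rwa [hc0, zero_mul, mul_zero, zero_add] at E4) hd
  ext
  exacts [ha0, hb0, hc0, hd0]

variable [Fact (∀ x : R, s * x = x * s)]

lemma isUnit_diag_s14 {a d : R} (ha : IsUnit a) (hd : IsUnit d) : IsUnit (mk a 0 0 d : FM R s) := by
  obtain ⟨u, rfl⟩ := ha
  obtain ⟨v, rfl⟩ := hd
  exact ⟨⟨mk u 0 0 v, mk ↑u⁻¹ 0 0 ↑v⁻¹, by ext <;> simp, by ext <;> simp⟩, rfl⟩

lemma isStronglyClean_diag {a d : R} (ha : IsStronglyClean a) (hd : IsStronglyClean d) :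
    IsStronglyClean (mk a 0 0 d : FM R s) := by
  obtain ⟨e, he, hae, hua⟩ := ha
  obtain ⟨f, hf, hdf, hud⟩ := hd
  refine ⟨mk e 0 0 f, ?_, ?_, ?_⟩
  · ext <;> simp [he.eq, hf.eq]
  · ext <;> simp [hae, hdf]
  · convert isUnit_diag_s14 hua hud using 1
    ext <;> simp

lemma eq_diag_of_commute_diag_zero_one {B : FM R s} (h : Commute B (mk 0 0 0 1)) :
    B = mk B.a 0 0 B.d := by
  have h' := (Commute.one_right B).sub_right h
  rw [show (1 : FM R s) - mk 0 0 0 1 = mk 1 0 0 0 by ext <;> simp] at h'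
  exact eq_diag_of_commute_diag_one_zero h'

lemma one_sub_sq_sub_diag_one_zero {e : FM R s} (he : IsIdempotentElem e) :
    1 - (e - mk 1 0 0 0) ^ 2 = mk e.a 0 0 (1 - e.d) := by
  obtain ⟨E1, E2, E3, E4⟩ := isIdempotentElem_iff.1 he
  have hbc := eq_sub_of_add_eq' E1
  have hbd := eq_sub_of_add_eq' E2
  have hdc := eq_sub_of_add_eq' E3
  have hcb := eq_sub_of_add_eq E4
  ext <;> simp only [sq, mul_a, mul_b, mul_c, mul_d, sub_a, sub_b, sub_c, sub_d, one_a, one_b,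
    one_c, one_d, sub_zero, hbc, hbd, hdc, hcb] <;> noncomm_ring

lemma exists_units_conj_eq_diag_one_zero {e : FM R s} (he : IsIdempotentElem e)
    (ha : IsUnit e.a) (hd : IsUnit (1 - e.d)) :
    ∃ u : (FM R s)ˣ, ↑u⁻¹ * e * ↑u = (mk 1 0 0 0 : FM R s) := by
  refine he.exists_units_conj_eq_of_isUnit (isIdempotentElem_iff.2 (by simp)) ?_
  rw [one_sub_sq_sub_diag_one_zero he]
  exact isUnit_diag_s14 ha hd

lemma isIdempotentElem_cases [IsLocalRing R] {e : FM R s} (he : IsIdempotentElem e) :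
    e = 0 ∨ e = 1 ∨ ∃ u : (FM R s)ˣ,
      ↑u⁻¹ * e * ↑u = (mk 1 0 0 0 : FM R s) ∨
        ↑u⁻¹ * e * ↑u = (mk 0 0 0 1 : FM R s) := by
  by_cases h₁ : IsUnit e.a ∧ IsUnit (1 - e.d)
  · obtain ⟨u, hu⟩ := exists_units_conj_eq_diag_one_zero he h₁.1 h₁.2
    exact .inr (.inr ⟨u, .inl hu⟩)
  by_cases h₂ : IsUnit (1 - e.a) ∧ IsUnit e.d
  · obtain ⟨u, hu⟩ := exists_units_conj_eq_diag_one_zero he.one_sub (by simpa using h₂.1)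
      (by simpa using h₂.2)
    refine .inr (.inr ⟨u, .inr ?_⟩)
    calc ↑u⁻¹ * e * ↑u = 1 - ↑u⁻¹ * (1 - e) * ↑u := by simp [mul_sub, sub_mul]
      _ = mk 0 0 0 1 := by rw [hu]; ext <;> simp
  by_cases ha : IsUnit e.a
  · have hd : ¬IsUnit (1 - e.d) := fun h => h₁ ⟨ha, h⟩
    have ha' : ¬IsUnit (1 - e.a) := fun h =>
      h₂ ⟨h, (IsLocalRing.isUnit_or_isUnit_one_sub e.d).resolve_right hd⟩
    exact .inr (.inl (sub_eq_zero.1 (eq_zero_of_isIdempotentElem he.one_sub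
      (by simpa using ha') (by simpa using hd))).symm)
  · have hd : ¬IsUnit e.d := fun h =>
      h₂ ⟨(IsLocalRing.isUnit_or_isUnit_one_sub e.a).resolve_left ha, h⟩
    exact .inl (eq_zero_of_isIdempotentElem he ha hd)

end FM

theorem stmt14 {R : Type*} [Ring R] [IsLocalRing R] (s : R)
    [Fact (∀ x : R, s * x = x * s)] (A : FM R s) :
    IsStronglyClean A ↔
      IsUnit A ∨ IsUnit (1 - A) ∨
        ∃ a b : R, ∃ u : (FM R s)ˣ,
          ((u⁻¹ : (FM R s)ˣ) : FM R s) * A * (u : FM R s) = FM.mk a 0 0 b := by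
  constructor
  · rintro ⟨e, he, hAe, hunit⟩
    have hconj : ∀ u : (FM R s)ˣ, Commute (↑u⁻¹ * A * ↑u) (↑u⁻¹ * e * ↑u) :=
      Commute.units_conj hAe
    rcases FM.isIdempotentElem_cases he with rfl | rfl | ⟨u, hu | hu⟩
    · exact .inl (by rwa [sub_zero] at hunit)
    · exact .inr (.inl (by rw [← neg_sub]; exact hunit.neg))
    · exact .inr (.inr ⟨_, _, u, FM.eq_diag_of_commute_diag_one_zero (hu ▸ hconj u)⟩)
    · exact .inr (.inr ⟨_, _, u, FM.eq_diag_of_commute_diag_zero_one (hu ▸ hconj u)⟩)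
  · rintro (hA | hA | ⟨a, b, u, hu⟩)
    · exact hA.isStronglyClean
    · exact isStronglyClean_of_isUnit_one_sub hA
    · rw [← isStronglyClean_units_conj_iff u, hu]
      exact FM.isStronglyClean_diag (IsLocalRing.isStronglyClean a)
        (IsLocalRing.isStronglyClean b)
end

section
/- Let R be a commutative ring with s ∈ R. For matrices A, B ∈ M₂(R;s), define det_s([[a,b],[c,d]]) = ad - s²bc. Then det_s(AB) = det_s(A)·det_s(B); moreover, A is a unit of M₂(R;s) if and only if det_s(A) is a unit of R, and in that case A⁻¹ = det_s(A)⁻¹·[[d,-b],[-c,a]]. -/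
/-- The `s`-determinant of a formal matrix. -/
def FM.dets {R : Type*} [CommRing R] {s : R} (A : FM R s) : R :=
  A.a * A.d - s * s * (A.b * A.c)

/-! Both products of `A = [[a,b],[c,d]]` with its adjugate `[[d,-b],[-c,a]]` equal
`dets A · 1`, exactly as for ordinary matrices. Since `dets` is multiplicative it is a monoid
homomorphism and sends units to units; conversely, if `dets A` is a unit then
`(dets A)⁻¹ · adj A` is a two-sided inverse of `A`. -/

namespace FM

variable {R : Type*} [CommRing R] {s : R}

@[simp] lemma dets_one : (1 : FM R s).dets = 1 := by
  simp [dets]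

lemma dets_mul (A B : FM R s) : (A * B).dets = A.dets * B.dets := by
  simp only [dets, mul_a, mul_b, mul_c, mul_d]
  ring

def detsHom : FM R s →* R where
  toFun := dets
  map_one' := dets_one
  map_mul' := dets_mul

def scaledAdjugate (r : R) (A : FM R s) : FM R s :=
  ⟨r * A.d, r * -A.b, r * -A.c, r * A.a⟩

variable {r : R} {A : FM R s}

lemma mul_scaledAdjugate (h : A.dets * r = 1) : A * scaledAdjugate r A = 1 := by
  simp only [dets] at h
  ext <;> simp only [scaledAdjugate, mul_a, mul_b, mul_c, mul_d, one_a, one_b, one_c, one_d]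
  · linear_combination h
  · ring
  · ring
  · linear_combination h

lemma scaledAdjugate_mul (h : A.dets * r = 1) : scaledAdjugate r A * A = 1 := by
  simp only [dets] at h
  ext <;> simp only [scaledAdjugate, mul_a, mul_b, mul_c, mul_d, one_a, one_b, one_c, one_d]
  · linear_combination h
  · ring
  · ring
  · linear_combination h

lemma isUnit_iff_isUnit_dets : IsUnit A ↔ IsUnit A.dets := by
  refine ⟨fun hA => hA.map detsHom, fun h => ?_⟩
  have hr := Ring.mul_inverse_cancel _ h
  exact ⟨⟨A, _, mul_scaledAdjugate hr, scaledAdjugate_mul hr⟩, rfl⟩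

lemma inverse_eq_scaledAdjugate (hA : IsUnit A) :
    Ring.inverse A = scaledAdjugate (Ring.inverse A.dets) A := by
  have hr := Ring.mul_inverse_cancel _ (isUnit_iff_isUnit_dets.mp hA)
  calc Ring.inverse A = Ring.inverse A * (A * scaledAdjugate _ A) := by
        rw [mul_scaledAdjugate hr, mul_one]
    _ = scaledAdjugate _ A := Ring.inverse_mul_cancel_left _ _ hA

end FM

theorem stmt16 {R : Type*} [CommRing R] (s : R) :
    (∀ A B : FM R s, (A * B).dets = A.dets * B.dets) ∧
    (∀ A : FM R s, IsUnit A ↔ IsUnit A.dets) ∧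
    (∀ A : FM R s, IsUnit A →
      Ring.inverse A = FM.mk (Ring.inverse A.dets * A.d) (Ring.inverse A.dets * -A.b)
        (Ring.inverse A.dets * -A.c) (Ring.inverse A.dets * A.a)) :=
  ⟨FM.dets_mul, fun _ => FM.isUnit_iff_isUnit_dets, fun _ => FM.inverse_eq_scaledAdjugate⟩
end
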